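/- For every n ≥ 1, the n×n lower triangular matrix M_n with (i,j) entry m_{i,j} := Σ_{d|i} p(d−j) μ(i/d) for 1 ≤ j ≤ i ≤ n (and 0 for j > i) is the inverse of A_n; that is, M_n · A_n = A_n · M_n = I_n. -/

import Mathlib

open ArithmeticFunction

/-- `c(m) = (-1)^k` when `m = k(3k+1)/2` or `m = k(3k-1)/2` for some integer `k ≥ 0`,
and `c(m) = 0` otherwise. -/
def pentCoeff (m : ℤ) : ℤ :=
  ∑ k ∈ Finset.range (m.toNat + 1),
    ((if 2 * m = (k : ℤ) * (3 * k + 1) then (-1 : ℤ) ^ k else 0) +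
      (if 2 * m = (k : ℤ) * (3 * k - 1) ∧ 1 ≤ k then (-1 : ℤ) ^ k else 0))

/-- `a_{n,i} := ∑_{s=0}^{⌊n/i⌋ - 1} c(n - (s+1) i)`. -/
def aEnt (n i : ℕ) : ℤ :=
  ∑ s ∈ Finset.range (n / i), pentCoeff ((n : ℤ) - (s + 1) * i)

/-- The matrix `A_n`, with `(i,j)` entry `a_{i,j}` for `1 ≤ j ≤ i ≤ n` and `0` for `j > i`
(indices shifted to `Fin n`). -/
def Amat (n : ℕ) : Matrix (Fin n) (Fin n) ℤ :=
  fun i j => if (j : ℕ) ≤ (i : ℕ) then aEnt ((i : ℕ) + 1) ((j : ℕ) + 1) else 0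

/-- Euler's partition function `p(n)` (number of partitions of `n`), for `n ≥ 0`. -/
def partitionFun (n : ℕ) : ℕ := Fintype.card (Nat.Partition n)

/-- The matrix `M_n`, with `(i,j)` entry `∑_{d ∣ i} p(d-j) μ(i/d)` for `1 ≤ j ≤ i ≤ n`
and `0` for `j > i`; the convention `p(m) = 0` for `m < 0` is enforced by the guard
`j ≤ d` (indices shifted to `Fin n`). -/
def Mmat (n : ℕ) : Matrix (Fin n) (Fin n) ℤ :=
  fun i j =>
    if (j : ℕ) ≤ (i : ℕ) then
      ∑ d ∈ Nat.divisors ((i : ℕ) + 1),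
        (if (j : ℕ) + 1 ≤ d then (partitionFun (d - ((j : ℕ) + 1)) : ℤ) else 0) *
          moebius (((i : ℕ) + 1) / d)
    else 0

/-!
With `P(x) = ∑ p(n) xⁿ = ∏ (1 - xᵏ)⁻¹`, Euler's pentagonal number theorem
`∏ (1 - xᵏ) = ∑ c(m) xᵐ` says `P(x) · ∑ c(m) xᵐ = 1`.
Since `a_{I,K} = ∑_{K ∣ N ≤ I} c(I - N)` and `m_{K,J}` is the Dirichlet convolution of
`d ↦ p(d - J)` with `μ`, swapping the sums and applying Möbius inversion turns
`∑_K a_{I,K} m_{K,J}` into `∑_N c(I - N) p(N - J)`, the coefficient of `x^I` in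
`x^J · P(x) · ∑ c(m) xᵐ = x^J`.
-/

open Finset PowerSeries PowerSeries.WithPiTopology
open scoped ArithmeticFunction.Moebius

noncomputable def partitionSeries (R : Type*) [Semiring R] : R⟦X⟧ :=
  PowerSeries.mk fun n ↦ (partitionFun n : R)

theorem partitionSeries_mul_pentagonalSeries (R : Type*) [CommRing R] :
    partitionSeries R * pentagonalSeries R = 1 := by
  -- The identity is topology-free; the discrete topology lets us multiply the products factorwise.
  let _ : TopologicalSpace R := ⊥
  have : DiscreteTopology R := ⟨rfl⟩
  have hprod := (Nat.Partition.hasProd_powerSeriesMk_card_restricted R (fun _ ↦ True)).mul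
    (hasProd_one_sub_X_pow R)
  simp only [if_true, pow_mul, tsum_pow_mul_one_sub_of_constantCoeff_eq_zero, constantCoeff_X,
    zero_pow, ne_eq, Nat.add_one_ne_zero, not_false_eq_true, map_pow] at hprod
  simpa [Nat.Partition.restricted, partitionFun, partitionSeries] using hprod.unique hasProd_one

theorem pentCoeff_natCast_eq_sum (m : ℕ) : pentCoeff m = ∑ k ∈ range (m + 1),
    ((if pentagonal (-k) = m then (-1 : ℤ) ^ k else 0) +
      (if pentagonal k = m ∧ 1 ≤ k then (-1 : ℤ) ^ k else 0)) := by
  refine sum_congr (by simp) fun k _ ↦ ?_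
  have h₁ := two_mul_natCast_pentagonal k
  have h₂ := two_mul_natCast_pentagonal_neg k
  congr 2 <;> apply propext <;> omega

theorem natAbs_le_pentagonal (k : ℤ) : k.natAbs ≤ pentagonal k := by
  have := two_mul_natCast_pentagonal k
  zify
  rcases le_total 0 k with h | h
  · rw [abs_of_nonneg h]; nlinarith
  · rw [abs_of_nonpos h]; nlinarith

theorem pentCoeff_natCast (m : ℕ) : pentCoeff m = (pentagonalSeries ℤ).coeff m := by
  rw [pentCoeff_natCast_eq_sum]
  by_cases hm : ∃ k, pentagonal k = m
  · obtain ⟨k, rfl⟩ := hm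
    rw [coeff_pentagonalSeries_pentagonal,
      sum_eq_single_of_mem k.natAbs (mem_range.2 (by have := natAbs_le_pentagonal k; omega))]
    · rw [← Int.negOnePow_abs, Int.abs_eq_natAbs, Int.coe_negOnePow_natCast]
      simp only [pentagonal_inj, Int.cast_id]
      split_ifs <;> omega
    · intro b _ hb
      simp only [pentagonal_inj]
      omega
  · rw [coeff_pentagonalSeries_eq_zero ℤ (by simpa using hm)]
    refine sum_eq_zero fun k _ ↦ ?_
    simp [show ∀ j, pentagonal j ≠ m from fun j hj ↦ hm ⟨j, hj⟩]

theorem sum_divisors_sum_divisors_mul_moebius {R : Type*} [NonAssocRing R] (g : ℕ → R)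
    {N : ℕ} (hN : 0 < N) :
    ∑ K ∈ N.divisors, ∑ d ∈ K.divisors, g d * μ (K / d) = g N := by
  refine sum_eq_iff_sum_mul_moebius_eq.mpr (fun n _ ↦ ?_) N hN
  rw [← Nat.sum_divisorsAntidiagonal' (f := fun a b ↦ g b * (μ a : R))]
  exact sum_congr rfl fun _ _ ↦ Int.cast_comm _ _

theorem sum_range_div_eq_sum_filter_dvd {M : Type*} [AddCommMonoid M] (I K : ℕ) (f : ℕ → M) :
    ∑ s ∈ range (I / K), f ((s + 1) * K) =
      ∑ N ∈ (range (I + 1)).filter (fun N ↦ K ∣ N ∧ N ≠ 0), f N := by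
  rcases K.eq_zero_or_pos with rfl | hK
  · simp
  refine sum_nbij' (fun s ↦ (s + 1) * K) (fun N ↦ N / K - 1) ?_ ?_ ?_ ?_ fun _ _ ↦ rfl
  · intro s hs
    simp only [mem_range, mem_filter] at hs ⊢
    have : (s + 1) * K ≤ I := (Nat.le_div_iff_mul_le hK).mp hs
    exact ⟨by omega, dvd_mul_left K _, by positivity⟩
  · intro N hN
    simp only [mem_range, mem_filter] at hN ⊢
    obtain ⟨hN, ⟨q, rfl⟩, hN0⟩ := hN
    have : q ≤ I / K := (Nat.le_div_iff_mul_le hK).mpr (by rw [mul_comm]; omega)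
    have := right_ne_zero_of_mul hN0
    rw [Nat.mul_div_cancel_left q hK]
    omega
  · intro s _
    simp [Nat.mul_div_cancel _ hK]
  · intro N hN
    simp only [mem_range, mem_filter] at hN ⊢
    obtain ⟨-, ⟨q, rfl⟩, hN0⟩ := hN
    have := right_ne_zero_of_mul hN0
    rw [Nat.mul_div_cancel_left q hK, Nat.sub_add_cancel (by omega), mul_comm]

theorem sum_range_sum_range_div_eq_sum_divisors {M : Type*} [AddCommMonoid M] {I L : ℕ}
    (hIL : I < L) (F : ℕ → ℕ → M) :
    ∑ K ∈ range L, ∑ s ∈ range (I / K), F K ((s + 1) * K) =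
      ∑ N ∈ range (I + 1), ∑ K ∈ N.divisors, F K N := by
  simp_rw [sum_range_div_eq_sum_filter_dvd]
  refine sum_comm' fun K N ↦ ?_
  simp only [mem_range, mem_filter, Nat.mem_divisors]
  constructor
  · rintro ⟨-, hN, hKN, hN0⟩
    exact ⟨⟨hKN, hN0⟩, hN⟩
  · rintro ⟨⟨hKN, hN0⟩, hN⟩
    have hKI := (Nat.le_of_dvd (Nat.pos_of_ne_zero hN0) hKN).trans_lt hN
    exact ⟨by omega, hN, hKN, hN0⟩

theorem aEnt_zero_right (I : ℕ) : aEnt I 0 = 0 := by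
  simp [aEnt]

theorem aEnt_eq_zero_of_lt {I K : ℕ} (h : I < K) : aEnt I K = 0 := by
  simp [aEnt, Nat.div_eq_of_lt h]

theorem Amat_apply (n : ℕ) (i k : Fin n) : Amat n i k = aEnt (i + 1) (k + 1) := by
  unfold Amat
  split_ifs with h
  · rfl
  · exact (aEnt_eq_zero_of_lt (by omega)).symm

theorem Mmat_apply (n : ℕ) (k j : Fin n) :
    Mmat n k j = ∑ d ∈ (k + 1 : ℕ).divisors,
      (X ^ (j + 1 : ℕ) * partitionSeries ℤ).coeff d * μ ((k + 1) / d) := by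
  simp only [Mmat, coeff_X_pow_mul', partitionSeries, coeff_mk]
  split_ifs with h
  · rfl
  · refine (sum_eq_zero fun d hd ↦ ?_).symm
    have := Nat.divisor_le hd
    rw [if_neg (by omega), zero_mul]

theorem Amat_mul_Mmat (n : ℕ) : Amat n * Mmat n = 1 := by
  ext i j
  set I := (i : ℕ) + 1
  set Q := X ^ (j + 1 : ℕ) * partitionSeries ℤ
  set g : ℕ → ℤ := fun d ↦ Q.coeff d
  calc (Amat n * Mmat n) i j
      = ∑ K ∈ range (n + 1), aEnt I K * ∑ d ∈ K.divisors, g d * μ (K / d) := by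
        rw [Matrix.mul_apply, sum_range_succ', aEnt_zero_right, zero_mul, add_zero,
          ← Fin.sum_univ_eq_sum_range]
        simp only [Amat_apply, Mmat_apply, g, Q, I]
    _ = ∑ N ∈ range (I + 1), ∑ K ∈ N.divisors,
          pentCoeff ((I : ℤ) - N) * ∑ d ∈ K.divisors, g d * μ (K / d) := by
        rw [← sum_range_sum_range_div_eq_sum_divisors (Nat.succ_lt_succ i.isLt)]
        simp only [aEnt, sum_mul]
        push_cast
        rfl
    _ = ∑ N ∈ range (I + 1), Q.coeff N * (pentagonalSeries ℤ).coeff (I - N) := by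
        refine sum_congr rfl fun N hN ↦ ?_
        rw [← mul_sum, ← Nat.cast_sub (by simpa [Nat.lt_succ_iff] using hN), pentCoeff_natCast,
          mul_comm]
        rcases N.eq_zero_or_pos with rfl | hN0
        · simp [Q, coeff_X_pow_mul']
        · have h := sum_divisors_sum_divisors_mul_moebius g hN0
          simp only [Int.cast_id] at h
          rw [h]
    _ = (X ^ (j + 1 : ℕ) * (partitionSeries ℤ * pentagonalSeries ℤ)).coeff I := by
        rw [← mul_assoc, coeff_mul, Nat.sum_antidiagonal_eq_sum_range_succ_mk]
    _ = (1 : Matrix (Fin n) (Fin n) ℤ) i j := by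
        rw [partitionSeries_mul_pentagonalSeries, mul_one, coeff_X_pow, Matrix.one_apply]
        simp [I, Fin.ext_iff]

theorem statement8_general (n : ℕ) :
    Mmat n * Amat n = 1 ∧ Amat n * Mmat n = 1 :=
  ⟨mul_eq_one_comm.mp (Amat_mul_Mmat n), Amat_mul_Mmat n⟩

theorem statement8 (n : ℕ) (hn : 1 ≤ n) :
    Mmat n * Amat n = 1 ∧ Amat n * Mmat n = 1 :=
  statement8_general n
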